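/- Let p be a prime with p ≡ 1 mod 4. Then ∫_{Z_p} |x² + 1|_p dx = (p−1)/(p+1), where dx is the Haar probability measure and |·|_p the normalized p-adic absolute value. -/

import Mathlib

/-!
Since `-1` is a nonzero square modulo `p`, Hensel's lemma gives `a ∈ ℤ_p` with `a² = -1`, and
`‖a‖ = ‖2‖ = 1`. The ultrametric inequality applied to `(x + a) - (x - a) = 2a` forces one of
`‖x - a‖`, `‖x + a‖` to be `1`, so `‖x² + 1‖ = ‖x - a‖ ‖x + a‖ = ‖x - a‖ + ‖x + a‖ - 1` and, by
translation invariance, the integral is `2 ∫ ‖x‖ dμ - 1`. The closed ball of radius `p⁻ⁿ` is the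
kernel of `ℤ_p → ℤ/pⁿ`, a subgroup of index `pⁿ`, so it has measure `p⁻ⁿ`; summing over the
spheres `‖x‖ = p⁻ⁿ` gives `∫ ‖x‖ dμ = (1 - p⁻¹) ∑ p⁻²ⁿ = p / (p + 1)`.
-/

open MeasureTheory Metric Filter Topology Polynomial

namespace PadicInt

variable {p : ℕ} [Fact p.Prime]

theorem norm_lt_one_iff_toZMod_eq_zero (x : ℤ_[p]) : ‖x‖ < 1 ↔ toZMod x = 0 := by
  rw [← mem_nonunits, ← IsLocalRing.mem_maximalIdeal, ← ker_toZMod, RingHom.mem_ker]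

theorem norm_two_eq_one (hp : p ≠ 2) : ‖(2 : ℤ_[p])‖ = 1 := by
  exact_mod_cast norm_natCast_eq_one_iff.mpr ((Nat.coprime_primes Fact.out Nat.prime_two).mpr hp)

theorem isSquare_of_isSquare_toZMod (hp : p ≠ 2) {c : ℤ_[p]} (hc : IsSquare (toZMod c))
    (hc0 : toZMod c ≠ 0) : IsSquare c := by
  obtain ⟨r, hr⟩ := hc
  set a : ℤ_[p] := (r.val : ℤ_[p])
  have ha : toZMod a = r := by simp [a]
  have hnorm_a : ‖a‖ = 1 := by
    refine le_antisymm (norm_le_one a) (not_lt.mp fun h => hc0 ?_)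
    rw [hr, ← ha, (norm_lt_one_iff_toZMod_eq_zero a).mp h, mul_zero]
  have hF : ‖(X ^ 2 - C c).aeval a‖ < ‖(derivative (X ^ 2 - C c)).aeval a‖ ^ 2 := by
    have : ‖a ^ 2 - c‖ < 1 := by
      rw [norm_lt_one_iff_toZMod_eq_zero, map_sub, map_pow, ha, hr, sub_eq_zero, sq]
    have hderiv : ‖(derivative (X ^ 2 - C c)).aeval a‖ = 1 := by
      simp only [derivative_sub, derivative_X_pow, derivative_C, sub_zero, map_mul, map_natCast,
        aeval_X_pow]
      simp [hnorm_a, norm_two_eq_one hp]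
    rw [hderiv, one_pow]
    simpa using this
  obtain ⟨z, hz, -⟩ := hensels_lemma hF
  exact ⟨z, by simpa [sub_eq_zero, sq, eq_comm] using hz⟩

theorem norm_mul_eq_norm_add_norm_sub_one {u v : ℤ_[p]} (h : ‖u - v‖ = 1) :
    ‖u * v‖ = ‖u‖ + ‖v‖ - 1 := by
  have hmax := nonarchimedean u (-v)
  rw [← sub_eq_add_neg, h, norm_neg] at hmax
  rw [norm_mul]
  rcases le_total ‖u‖ ‖v‖ with huv | hvu
  · have hv : ‖v‖ = 1 := le_antisymm (norm_le_one v) (by simpa [huv] using hmax)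
    rw [hv]; ring
  · have hu : ‖u‖ = 1 := le_antisymm (norm_le_one u) (by simpa [hvu] using hmax)
    rw [hu]; ring

theorem norm_sq_add_one (hp : p ≠ 2) {a : ℤ_[p]} (ha : a * a = -1) (x : ℤ_[p]) :
    ‖x ^ 2 + 1‖ = ‖x - a‖ + ‖x + a‖ - 1 := by
  have hnorm_a : ‖a‖ = 1 := isUnit_iff.mp (IsUnit.of_mul_eq_one (-a) (by linear_combination -ha))
  rw [show x ^ 2 + 1 = (x - a) * (x + a) by linear_combination ha]
  refine norm_mul_eq_norm_add_norm_sub_one ?_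
  rw [show x - a - (x + a) = -(2 * a) by ring, norm_neg, norm_mul, norm_two_eq_one hp, hnorm_a,
    one_mul]

instance nhdsNE_zero_neBot : (𝓝[≠] (0 : ℤ_[p])).NeBot := by
  have hp0 : (p : ℤ_[p]) ≠ 0 := Nat.cast_ne_zero.mpr (Fact.out : p.Prime).ne_zero
  rw [← mem_closure_iff_nhdsWithin_neBot]
  refine mem_closure_of_tendsto (tendsto_pow_atTop_nhds_zero_iff_norm_lt_one.mpr ?_)
    (Eventually.of_forall fun n => pow_ne_zero n hp0)
  rw [norm_p]
  exact inv_lt_one_of_one_lt₀ (mod_cast (Fact.out : p.Prime).one_lt)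

theorem closedBall_zero_eq_ker (n : ℕ) :
    closedBall (0 : ℤ_[p]) (p ^ (-n : ℤ)) =
      (toZModPow n : ℤ_[p] →+* ZMod (p ^ n)).toAddMonoidHom.ker := by
  ext x
  rw [SetLike.mem_coe, AddMonoidHom.mem_ker, mem_closedBall_zero_iff, norm_le_pow_iff_mem_span_pow,
    ← ker_toZModPow, RingHom.mem_ker]
  rfl

theorem ball_zero_zpow_eq_closedBall (n : ℕ) :
    ball (0 : ℤ_[p]) (p ^ (-n : ℤ)) = closedBall 0 (p ^ (-(n + 1 : ℕ) : ℤ)) := by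
  ext x
  rw [mem_ball_zero_iff, mem_closedBall_zero_iff, norm_le_pow_iff_norm_lt_pow_add_one]
  push_cast
  ring_nf

theorem iUnion_sphere_zero_zpow : ⋃ n : ℕ, sphere (0 : ℤ_[p]) (p ^ (-n : ℤ)) = {0}ᶜ := by
  ext x
  simp only [Set.mem_iUnion, mem_sphere_zero_iff_norm, Set.mem_compl_singleton_iff]
  constructor
  · rintro ⟨n, hn⟩ rfl
    exact (zpow_pos (mod_cast (Fact.out : p.Prime).pos) _).ne' (norm_zero.symm.trans hn).symm
  · exact fun hx => ⟨x.valuation, norm_eq_zpow_neg_valuation hx⟩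

theorem pairwise_disjoint_sphere_zero_zpow :
    Pairwise (Function.onFun Disjoint fun n : ℕ => sphere (0 : ℤ_[p]) (p ^ (-n : ℤ))) := by
  intro m n hmn
  refine Set.disjoint_left.mpr fun x hm hn => hmn ?_
  rw [mem_sphere_zero_iff_norm] at hm hn
  have hp1 : (1 : ℝ) < p := mod_cast (Fact.out : p.Prime).one_lt
  simpa using zpow_right_injective₀ (zero_lt_one.trans hp1) hp1.ne' (hm.symm.trans hn)

variable [MeasurableSpace ℤ_[p]] [BorelSpace ℤ_[p]] (μ : Measure ℤ_[p]) [IsProbabilityMeasure μ]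

theorem measureReal_closedBall_zero [μ.IsAddLeftInvariant] (n : ℕ) :
    μ.real (closedBall 0 (p ^ (-n : ℤ))) = (p : ℝ) ^ (-n : ℤ) := by
  set f := (toZModPow n : ℤ_[p] →+* ZMod (p ^ n)).toAddMonoidHom
  have hindex : f.ker.index = p ^ n := by
    rw [AddSubgroup.index_ker, f.range_eq_top_of_surjective (ZMod.ringHom_surjective _),
      AddSubgroup.card_top, Nat.card_zmod]
  have : f.ker.FiniteIndex := ⟨by rw [hindex]; exact pow_ne_zero n (Fact.out : p.Prime).ne_zero⟩
  have hmeas : MeasurableSet (f.ker : Set ℤ_[p]) := by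
    rw [← closedBall_zero_eq_ker]; exact measurableSet_closedBall
  have hmul := f.ker.index_mul_measure hmeas μ
  rw [measure_univ, hindex, ← closedBall_zero_eq_ker, mul_comm] at hmul
  rw [measureReal_def, ENNReal.eq_inv_of_mul_eq_one_left hmul]
  simp

theorem measureReal_sphere_zero [μ.IsAddLeftInvariant] (n : ℕ) :
    μ.real (sphere 0 (p ^ (-n : ℤ))) = (p : ℝ) ^ (-n : ℤ) - (p : ℝ) ^ (-(n + 1 : ℕ) : ℤ) := by
  rw [← closedBall_sdiff_ball, ball_zero_zpow_eq_closedBall,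
    measureReal_sdiff (closedBall_subset_closedBall ?_) measurableSet_closedBall,
    measureReal_closedBall_zero, measureReal_closedBall_zero]
  exact zpow_le_zpow_right₀ (mod_cast (Fact.out : p.Prime).one_le) (by omega)

theorem integral_norm [μ.IsAddHaarMeasure] : ∫ x, ‖x‖ ∂μ = p / (p + 1) := by
  have hp1 : (1 : ℝ) < p := mod_cast (Fact.out : p.Prime).one_lt
  have hterm (n : ℕ) :
      ∫ x in sphere 0 (p ^ (-n : ℤ)), ‖x‖ ∂μ = (1 - (p : ℝ)⁻¹) * ((p : ℝ)⁻¹ ^ 2) ^ n := by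
    rw [setIntegral_congr_fun isClosed_sphere.measurableSet
      (fun x hx => mem_sphere_zero_iff_norm.mp hx), setIntegral_const, measureReal_sphere_zero,
      smul_eq_mul]
    simp only [zpow_neg, zpow_natCast]
    ring
  have hq : (p : ℝ)⁻¹ ^ 2 < 1 :=
    pow_lt_one₀ (by positivity) (inv_lt_one_of_one_lt₀ hp1) two_ne_zero
  have hae : (⋃ n : ℕ, sphere (0 : ℤ_[p]) (p ^ (-n : ℤ))) =ᵐ[μ] Set.univ := by
    rw [ae_eq_univ, iUnion_sphere_zero_zpow, compl_compl, measure_singleton]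
  rw [← setIntegral_univ, ← setIntegral_congr_set hae,
    integral_iUnion (fun _ => isClosed_sphere.measurableSet) pairwise_disjoint_sphere_zero_zpow
      (continuous_norm.integrable_of_hasCompactSupport (.of_compactSpace _)).integrableOn]
  rw [tsum_congr hterm, tsum_mul_left, tsum_geometric_of_lt_one (by positivity) hq]
  have : (p : ℝ) ^ 2 - 1 ≠ 0 := by nlinarith
  field_simp
  ring

end PadicInt

/-- For a prime `p ≡ 1 (mod 4)`, `∫_{ℤ_p} |x² + 1|_p dx = (p−1)/(p+1)` with respect
to the Haar probability measure on `ℤ_p`. -/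
theorem stmt15 (p : ℕ) [Fact p.Prime] (hp : p % 4 = 1)
    [MeasurableSpace ℤ_[p]] [BorelSpace ℤ_[p]]
    (μ : Measure ℤ_[p]) [μ.IsAddHaarMeasure] [IsProbabilityMeasure μ] :
    ∫ x, ‖x ^ 2 + 1‖ ∂μ = ((p : ℝ) - 1) / ((p : ℝ) + 1) := by
  have hp2 : p ≠ 2 := by omega
  obtain ⟨a, ha⟩ : IsSquare (-1 : ℤ_[p]) :=
    PadicInt.isSquare_of_isSquare_toZMod hp2
      (by simpa using ZMod.exists_sq_eq_neg_one_iff.mpr (by omega)) (by simp)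
  have hsub : Integrable (fun x => ‖x - a‖) μ :=
    (continuous_sub_right a).norm.integrable_of_hasCompactSupport (.of_compactSpace _)
  have hadd : Integrable (fun x => ‖x + a‖) μ :=
    (continuous_add_const a).norm.integrable_of_hasCompactSupport (.of_compactSpace _)
  simp_rw [PadicInt.norm_sq_add_one hp2 ha.symm]
  rw [integral_sub (f := fun x => ‖x - a‖ + ‖x + a‖) (hsub.add hadd) (integrable_const 1),
    integral_add hsub hadd,
    integral_sub_right_eq_self (fun x => ‖x‖), integral_add_right_eq_self (fun x => ‖x‖),
    PadicInt.integral_norm, integral_const, probReal_univ, one_smul]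
  field_simp
  ring
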